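/- arXiv:2508.07235 — 3 statements merged into one kernel-verified Lean document; each statement's English description precedes it below -/
import Mathlib

section
/- Let n ≥ 1 be an integer and let f : [0,∞) → ℝ be n times continuously differentiable, with f and each derivative f^{(i)} (0 ≤ i ≤ n) Lebesgue integrable on [0,∞) and tending to 0 at infinity. Let Ψ : ℝ → ℝ be n times continuously differentiable with Ψ and all derivatives Ψ^{(i)} (0 ≤ i ≤ n) bounded. Define I₁(Ψ)(u) = ∫₀^∞ Ψ(u − y) f(y) dy. Then for every integer k with 0 ≤ k ≤ n and every u ∈ ℝ, ∫₀^∞ Ψ(u − y) f^{(k)}(y) dy = (d^k/du^k) I₁(Ψ)(u) − Σ_{i=1}^{k} f^{(i−1)}(0) Ψ^{(k−i)}(u). -/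
open MeasureTheory Filter Finset

/-- Integrability of `y ↦ g (u - y) * h y` on `Ioi 0` when `g` is continuous bounded
and `h` integrable on `Ici 0`. -/
lemma aux_int_mul (g h : ℝ → ℝ) (hg : Continuous g) (C : ℝ) (hb : ∀ x, |g x| ≤ C)
    (hh : IntegrableOn h (Set.Ici 0)) (u : ℝ) :
    IntegrableOn (fun y => g (u - y) * h y) (Set.Ioi 0) := by
  refine Integrable.bdd_mul (hh.mono_set Set.Ioi_subset_Ici_self) ?_ (Eventually.of_forall fun x => by simpa [Real.norm_eq_abs] using hb _)
  exact (hg.comp (continuous_const.sub continuous_id)).aestronglyMeasurable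

/-- Integration by parts on `Ioi 0`. -/
lemma aux_parts (n : ℕ) (f : ℝ → ℝ) (hf : ContDiffOn ℝ n f (Set.Ici 0))
    (hf_int : ∀ i ≤ n, IntegrableOn (iteratedDerivWithin i f (Set.Ici 0)) (Set.Ici 0))
    (hf_lim : ∀ i ≤ n, Tendsto (iteratedDerivWithin i f (Set.Ici 0)) atTop (nhds 0))
    (k : ℕ) (hk : k + 1 ≤ n)
    (Ψ : ℝ → ℝ) (hΨ : ContDiff ℝ 1 Ψ)
    (C C' : ℝ) (hb : ∀ x, |Ψ x| ≤ C) (hb' : ∀ x, |deriv Ψ x| ≤ C') (u : ℝ) :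
    ∫ y in Set.Ioi (0:ℝ), Ψ (u - y) * iteratedDerivWithin (k+1) f (Set.Ici 0) y
      = (∫ y in Set.Ioi (0:ℝ), deriv Ψ (u - y) * iteratedDerivWithin k f (Set.Ici 0) y)
        - iteratedDerivWithin k f (Set.Ici 0) 0 * Ψ u := by
  set F : ℝ → ℝ := iteratedDerivWithin k f (Set.Ici 0) with hF
  set F' : ℝ → ℝ := iteratedDerivWithin (k+1) f (Set.Ici 0) with hF'
  have hΨc : Continuous Ψ := hΨ.continuous
  have hΨd : Differentiable ℝ Ψ := hΨ.differentiable one_ne_zero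
  have hkn : (k : WithTop ℕ∞) < n := by exact_mod_cast hk
  have hkn' : (k : WithTop ℕ∞) ≤ n := hkn.le
  have hFdiff : DifferentiableOn ℝ F (Set.Ici 0) :=
    hf.differentiableOn_iteratedDerivWithin hkn (uniqueDiffOn_Ici 0)
  have hFcont : ContinuousOn F (Set.Ici 0) :=
    hf.continuousOn_iteratedDerivWithin hkn' (uniqueDiffOn_Ici 0)
  -- the product function and its derivative
  have hG : ∀ y ∈ Set.Ioi (0:ℝ),
      HasDerivAt (fun y => Ψ (u - y) * F y)
        ((deriv Ψ (u - y)) * (-1) * F y + Ψ (u - y) * F' y) y := by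
    intro y hy
    have h1 : HasDerivAt (fun y : ℝ => Ψ (u - y)) (deriv Ψ (u - y) * (-1)) y :=
      (hΨd (u - y)).hasDerivAt.comp y (((hasDerivAt_id y).const_sub u))
    have h2 : HasDerivAt F (F' y) y := by
      have hmem : Set.Ici (0:ℝ) ∈ nhds y := Ici_mem_nhds hy
      have hd : HasDerivWithinAt F (derivWithin F (Set.Ici 0) y) (Set.Ici 0) y :=
        (hFdiff y (Set.mem_Ici.mpr (le_of_lt hy))).hasDerivWithinAt
      have := hd.hasDerivAt hmem
      rwa [show derivWithin F (Set.Ici 0) y = F' y from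
        (congrFun (iteratedDerivWithin_succ (n := k) (f := f) (s := Set.Ici 0)) y).symm] at this
    exact h1.mul h2
  have hint1 : IntegrableOn (fun y => deriv Ψ (u - y) * F y) (Set.Ioi 0) :=
    aux_int_mul (deriv Ψ) F (hΨ.continuous_deriv le_rfl) C' hb' (hf_int k (by omega)) u
  have hint2 : IntegrableOn (fun y => Ψ (u - y) * F' y) (Set.Ioi 0) :=
    aux_int_mul Ψ F' hΨc C hb (hf_int (k+1) hk) u
  have hint : IntegrableOn
      (fun y => (deriv Ψ (u - y)) * (-1) * F y + Ψ (u - y) * F' y) (Set.Ioi 0) := by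
    exact (hint1.neg.congr (Eventually.of_forall fun y => by simp)).add hint2
  have hlim : Tendsto (fun y => Ψ (u - y) * F y) atTop (nhds 0) := by
    rw [tendsto_zero_iff_norm_tendsto_zero]
    have hFlim : Tendsto (fun y => C * ‖F y‖) atTop (nhds 0) := by
      have := (hf_lim k (by omega)).norm
      simpa using this.const_mul C
    refine squeeze_zero (fun y => norm_nonneg _) (fun y => ?_) hFlim
    rw [norm_mul]
    have h0C : (0:ℝ) ≤ C := le_trans (abs_nonneg _) (hb 0)
    exact mul_le_mul_of_nonneg_right (hb _) (norm_nonneg _)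
  have hcont0 : ContinuousWithinAt (fun y => Ψ (u - y) * F y) (Set.Ici 0) 0 := by
    refine ContinuousWithinAt.mul ?_ (hFcont 0 Set.self_mem_Ici)
    exact (hΨc.comp (continuous_const.sub continuous_id)).continuousWithinAt
  have key := integral_Ioi_of_hasDerivAt_of_tendsto hcont0 hG hint hlim
  have split : ∫ y in Set.Ioi (0:ℝ), ((deriv Ψ (u - y)) * (-1) * F y + Ψ (u - y) * F' y)
      = (∫ y in Set.Ioi (0:ℝ), (deriv Ψ (u - y)) * (-1) * F y)
        + ∫ y in Set.Ioi (0:ℝ), Ψ (u - y) * F' y := by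
    exact integral_add (hint1.neg.congr (Eventually.of_forall fun y => by simp)) hint2
  have neg1 : (∫ y in Set.Ioi (0:ℝ), (deriv Ψ (u - y)) * (-1) * F y)
      = - ∫ y in Set.Ioi (0:ℝ), deriv Ψ (u - y) * F y := by
    rw [← integral_neg]
    congr 1; funext y; ring
  rw [split, neg1] at key
  have : - (∫ y in Set.Ioi (0:ℝ), deriv Ψ (u - y) * F y)
      + (∫ y in Set.Ioi (0:ℝ), Ψ (u - y) * F' y) = 0 - Ψ (u - 0) * F 0 := key
  simp only [sub_zero, zero_sub] at this
  linarith [this]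

/-- Differentiating the parametric integral. -/
lemma aux_deriv_under (n : ℕ) (f Ψ : ℝ → ℝ)
    (hf_int : ∀ i ≤ n, IntegrableOn (iteratedDerivWithin i f (Set.Ici 0)) (Set.Ici 0))
    (hΨ : ContDiff ℝ n Ψ)
    (hΨ_bdd : ∀ i ≤ n, ∃ C : ℝ, ∀ u : ℝ, |iteratedDeriv i Ψ u| ≤ C)
    (j : ℕ) (hj : j + 1 ≤ n) (u : ℝ) :
    HasDerivAt (fun u => ∫ y in Set.Ioi (0:ℝ), iteratedDeriv j Ψ (u - y) * f y)
      (∫ y in Set.Ioi (0:ℝ), iteratedDeriv (j+1) Ψ (u - y) * f y) u := by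
  obtain ⟨C, hC⟩ := hΨ_bdd j (by omega)
  obtain ⟨C', hC'⟩ := hΨ_bdd (j+1) hj
  have hf0 : IntegrableOn f (Set.Ici 0) := by
    have := hf_int 0 (by omega); simpa [iteratedDerivWithin_zero] using this
  have hjc : Continuous (iteratedDeriv j Ψ) := hΨ.continuous_iteratedDeriv j (by exact_mod_cast Nat.le_of_succ_le hj)
  have hjc' : Continuous (iteratedDeriv (j+1) Ψ) := hΨ.continuous_iteratedDeriv (j+1) (by exact_mod_cast hj)
  have hjd : Differentiable ℝ (iteratedDeriv j Ψ) :=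
    hΨ.differentiable_iteratedDeriv j (by exact_mod_cast hj)
  have key := hasDerivAt_integral_of_dominated_loc_of_deriv_le (F := fun x y => iteratedDeriv j Ψ (x - y) * f y)
    (F' := fun x y => iteratedDeriv (j+1) Ψ (x - y) * f y)
    (bound := fun y => C' * ‖f y‖) (μ := volume.restrict (Set.Ioi 0)) (x₀ := u)
    (s := Set.univ) Filter.univ_mem
    (Eventually.of_forall fun x =>
      ((hjc.comp (continuous_const.sub continuous_id)).aestronglyMeasurable.mul
        (hf0.mono_set Set.Ioi_subset_Ici_self).aestronglyMeasurable))
    (aux_int_mul (iteratedDeriv j Ψ) f hjc C hC hf0 u)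
    ((hjc'.comp (continuous_const.sub continuous_id)).aestronglyMeasurable.mul
        (hf0.mono_set Set.Ioi_subset_Ici_self).aestronglyMeasurable)
    (Eventually.of_forall fun y => fun x _ => by
      rw [norm_mul]
      exact mul_le_mul_of_nonneg_right (by simpa [Real.norm_eq_abs] using hC' (x - y)) (norm_nonneg _))
    (((hf0.mono_set Set.Ioi_subset_Ici_self).norm).const_mul C')
    (Eventually.of_forall fun y => fun x _ => by
      have h1 : HasDerivAt (fun x : ℝ => iteratedDeriv j Ψ (x - y))
          (iteratedDeriv (j+1) Ψ (x - y)) x := by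
        have := (hjd (x - y)).hasDerivAt.comp x ((hasDerivAt_id x).sub_const y)
        simpa [iteratedDeriv_succ, Function.comp_def] using this
      exact h1.mul_const (f y))
  exact key.2

/-- The iterated derivatives of `I₁`. -/
lemma aux_iter (n : ℕ) (f Ψ : ℝ → ℝ)
    (hf_int : ∀ i ≤ n, IntegrableOn (iteratedDerivWithin i f (Set.Ici 0)) (Set.Ici 0))
    (hΨ : ContDiff ℝ n Ψ)
    (hΨ_bdd : ∀ i ≤ n, ∃ C : ℝ, ∀ u : ℝ, |iteratedDeriv i Ψ u| ≤ C)
    (I₁ : ℝ → ℝ)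
    (hI₁ : ∀ u : ℝ, I₁ u = ∫ y in Set.Ioi (0:ℝ), Ψ (u - y) * f y)
    (j : ℕ) (hj : j ≤ n) :
    ∀ u : ℝ, iteratedDeriv j I₁ u = ∫ y in Set.Ioi (0:ℝ), iteratedDeriv j Ψ (u - y) * f y := by
  induction j with
  | zero => intro u; simpa [iteratedDeriv_zero] using hI₁ u
  | succ j ih =>
    intro u
    have ih' := ih (by omega)
    rw [iteratedDeriv_succ]
    have hfeq : iteratedDeriv j I₁ = fun u => ∫ y in Set.Ioi (0:ℝ), iteratedDeriv j Ψ (u - y) * f y :=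
      funext ih'
    rw [hfeq]
    exact (aux_deriv_under n f Ψ hf_int hΨ hΨ_bdd j hj u).deriv

/-- The key inductive identity, with `Ψ` generalized. -/
lemma aux_key (n : ℕ) (f : ℝ → ℝ) (hf : ContDiffOn ℝ n f (Set.Ici 0))
    (hf_int : ∀ i ≤ n, IntegrableOn (iteratedDerivWithin i f (Set.Ici 0)) (Set.Ici 0))
    (hf_lim : ∀ i ≤ n, Tendsto (iteratedDerivWithin i f (Set.Ici 0)) atTop (nhds 0)) :
    ∀ k, k ≤ n → ∀ Ψ : ℝ → ℝ, ContDiff ℝ k Ψ →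
      (∀ i ≤ k, ∃ C : ℝ, ∀ x : ℝ, |iteratedDeriv i Ψ x| ≤ C) → ∀ u : ℝ,
    ∫ y in Set.Ioi (0:ℝ), Ψ (u - y) * iteratedDerivWithin k f (Set.Ici 0) y
      = (∫ y in Set.Ioi (0:ℝ), iteratedDeriv k Ψ (u - y) * f y)
        - ∑ i ∈ Icc 1 k,
            iteratedDerivWithin (i - 1) f (Set.Ici 0) 0 * iteratedDeriv (k - i) Ψ u := by
  intro k
  induction k with
  | zero =>
    intro _ Ψ _ _ u
    simp [iteratedDerivWithin_zero, iteratedDeriv_zero]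
  | succ k ih =>
    intro hk Ψ hΨ hΨb u
    obtain ⟨C, hC⟩ := hΨb 0 (by omega)
    obtain ⟨C', hC'⟩ := hΨb 1 (by omega)
    rw [iteratedDeriv_one] at hC'
    rw [iteratedDeriv_zero] at hC
    have hΨ1 : ContDiff ℝ 1 Ψ := hΨ.of_le (by exact_mod_cast Nat.one_le_iff_ne_zero.mpr (by omega))
    have hparts := aux_parts n f hf hf_int hf_lim k hk Ψ hΨ1 C C' hC hC' u
    have hdΨ : ContDiff ℝ k (deriv Ψ) := by
      have : ContDiff ℝ ((k:ℕ∞) + 1) Ψ := by exact_mod_cast hΨ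
      exact (contDiff_succ_iff_deriv.mp (by exact_mod_cast this)).2.2
    have hdΨb : ∀ i ≤ k, ∃ C : ℝ, ∀ x : ℝ, |iteratedDeriv i (deriv Ψ) x| ≤ C := by
      intro i hi
      obtain ⟨D, hD⟩ := hΨb (i+1) (by omega)
      exact ⟨D, fun x => by rw [← iteratedDeriv_succ']; exact hD x⟩
    have hih := ih (by omega) (deriv Ψ) hdΨ hdΨb u
    rw [← iteratedDeriv_succ'] at hih
    have hsum : ∑ i ∈ Icc 1 k,
        iteratedDerivWithin (i - 1) f (Set.Ici 0) 0 * iteratedDeriv (k - i) (deriv Ψ) u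
        = ∑ i ∈ Icc 1 k,
        iteratedDerivWithin (i - 1) f (Set.Ici 0) 0 * iteratedDeriv (k + 1 - i) Ψ u := by
      refine Finset.sum_congr rfl fun i hi => ?_
      simp only [Finset.mem_Icc] at hi
      rw [← iteratedDeriv_succ', show k - i + 1 = k + 1 - i by omega]
    rw [hsum] at hih
    have htop : ∑ i ∈ Icc 1 (k+1),
        iteratedDerivWithin (i - 1) f (Set.Ici 0) 0 * iteratedDeriv (k + 1 - i) Ψ u
        = (∑ i ∈ Icc 1 k,
            iteratedDerivWithin (i - 1) f (Set.Ici 0) 0 * iteratedDeriv (k + 1 - i) Ψ u)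
          + iteratedDerivWithin k f (Set.Ici 0) 0 * Ψ u := by
      rw [Finset.sum_Icc_succ_top (by omega)]
      simp [iteratedDeriv_zero]
    rw [hparts, hih, htop]
    ring

/-- For `I₁(Ψ)(u) = ∫₀^∞ Ψ(u − y) f(y) dy`, one has
`∫₀^∞ Ψ(u − y) f^{(k)}(y) dy = (d^k/du^k) I₁(Ψ)(u) − Σ_{i=1}^{k} f^{(i−1)}(0) Ψ^{(k−i)}(u)`. -/
theorem stmt_0 (n : ℕ) (hn : 1 ≤ n) (f Ψ : ℝ → ℝ)
    (hf : ContDiffOn ℝ n f (Set.Ici 0))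
    (hf_int : ∀ i ≤ n, IntegrableOn (iteratedDerivWithin i f (Set.Ici 0)) (Set.Ici 0))
    (hf_lim : ∀ i ≤ n, Tendsto (iteratedDerivWithin i f (Set.Ici 0)) atTop (nhds 0))
    (hΨ : ContDiff ℝ n Ψ)
    (hΨ_bdd : ∀ i ≤ n, ∃ C : ℝ, ∀ u : ℝ, |iteratedDeriv i Ψ u| ≤ C)
    (I₁ : ℝ → ℝ)
    (hI₁ : ∀ u : ℝ, I₁ u = ∫ y in Set.Ioi (0:ℝ), Ψ (u - y) * f y)
    (k : ℕ) (hk : k ≤ n) (u : ℝ) :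
    ∫ y in Set.Ioi (0:ℝ), Ψ (u - y) * iteratedDerivWithin k f (Set.Ici 0) y
      = iteratedDeriv k I₁ u
        - ∑ i ∈ Icc 1 k,
            iteratedDerivWithin (i - 1) f (Set.Ici 0) 0 * iteratedDeriv (k - i) Ψ u := by
  rw [aux_iter n f Ψ hf_int hΨ hΨ_bdd I₁ hI₁ k hk u]
  exact aux_key n f hf hf_int hf_lim k hk Ψ (hΨ.of_le (by exact_mod_cast hk))
    (fun i hi => hΨ_bdd i (le_trans hi hk)) u
end

section
/- Let n ≥ 1 be an integer, let α⁰, α¹, …, αⁿ ∈ ℝ with α⁰ ≠ 0, and let 𝒫(d/dx) = Σ_{j=0}^{n} α^{j} d^{j}/dx^{j}. Let f : [0,∞) → ℝ be n times continuously differentiable with f and each derivative f^{(i)} (0 ≤ i ≤ n) integrable on [0,∞) and tending to 0 at infinity, satisfying the differential equation 𝒫(d/dx) f(x) = 0 for all x ≥ 0, with boundary values f^{(k)}(0) = f^{k} ∈ ℝ for k = 0, …, n−1. Let Ψ : ℝ → ℝ be n times continuously differentiable with Ψ and all derivatives bounded, and set I₁(Ψ)(u) = ∫₀^∞ Ψ(u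 − y) f(y) dy. Then for all u ∈ ℝ, 𝒫(d/du) I₁(Ψ)(u) = Σ_{k=0}^{n−1} Ψ^{(k)}(u) · Σ_{i=k}^{n−1} α^{i+1} f^{i−k}. -/
open MeasureTheory Filter Finset

/-- If `𝒫(d/dx) f = 0` with `𝒫 = Σ_{j=0}^{n} α^j d^j/dx^j`, `α⁰ ≠ 0`, and
boundary values `f^{(k)}(0) = f^k`, then for `I₁(Ψ)(u) = ∫₀^∞ Ψ(u − y) f(y) dy` one has
`𝒫(d/du) I₁(Ψ)(u) = Σ_{k=0}^{n−1} Ψ^{(k)}(u) · Σ_{i=k}^{n−1} α^{i+1} f^{i−k}`. -/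
theorem stmt_1 (n : ℕ) (hn : 1 ≤ n) (α : ℕ → ℝ) (hα : α 0 ≠ 0)
    (f Ψ : ℝ → ℝ) (fbd : ℕ → ℝ)
    (hf : ContDiffOn ℝ n f (Set.Ici 0))
    (hf_int : ∀ i ≤ n, IntegrableOn (iteratedDerivWithin i f (Set.Ici 0)) (Set.Ici 0))
    (hf_lim : ∀ i ≤ n, Tendsto (iteratedDerivWithin i f (Set.Ici 0)) atTop (nhds 0))
    (hode : ∀ x : ℝ, 0 ≤ x →
      ∑ j ∈ range (n + 1), α j * iteratedDerivWithin j f (Set.Ici 0) x = 0)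
    (hbc : ∀ k < n, iteratedDerivWithin k f (Set.Ici 0) 0 = fbd k)
    (hΨ : ContDiff ℝ n Ψ)
    (hΨ_bdd : ∀ i ≤ n, ∃ C : ℝ, ∀ u : ℝ, |iteratedDeriv i Ψ u| ≤ C)
    (I₁ : ℝ → ℝ)
    (hI₁ : ∀ u : ℝ, I₁ u = ∫ y in Set.Ioi (0:ℝ), Ψ (u - y) * f y)
    (u : ℝ) :
    ∑ j ∈ range (n + 1), α j * iteratedDeriv j I₁ u
      = ∑ k ∈ range n, iteratedDeriv k Ψ u *
          ∑ i ∈ Icc k (n - 1), α (i + 1) * fbd (i - k) := by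
  set g : ℕ → ℝ → ℝ := fun i => iteratedDerivWithin i f (Set.Ici 0) with hgdef
  have hbc' : ∀ k < n, g k 0 = fbd k := hbc
  have hode' : ∀ x : ℝ, 0 ≤ x → ∑ j ∈ range (n + 1), α j * g j x = 0 := hode
  -- basic facts about g
  have hgc : ∀ i ≤ n, ContinuousOn (g i) (Set.Ici 0) := fun i hi =>
    hf.continuousOn_iteratedDerivWithin (by exact_mod_cast hi) (uniqueDiffOn_Ici 0)
  have hgd : ∀ i < n, ∀ x : ℝ, 0 < x → HasDerivAt (g i) (g (i + 1) x) x := by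
    intro i hi x hx
    have hdiff := hf.differentiableOn_iteratedDerivWithin (m := i)
      (by exact_mod_cast hi) (uniqueDiffOn_Ici 0)
    have hxm : x ∈ Set.Ici (0:ℝ) := le_of_lt hx
    have h1 := (hdiff x hxm).hasDerivWithinAt
    have h2 : g (i + 1) x = derivWithin (g i) (Set.Ici 0) x :=
      congrFun iteratedDerivWithin_succ x
    rw [h2]
    exact h1.hasDerivAt (Ici_mem_nhds hx)
  have hgi : ∀ i ≤ n, IntegrableOn (g i) (Set.Ioi 0) := fun i hi =>
    (hf_int i hi).mono_set Set.Ioi_subset_Ici_self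
  have hg0 : g 0 = f := iteratedDerivWithin_zero
  have hfi : IntegrableOn f (Set.Ioi 0) := hg0 ▸ hgi 0 (Nat.zero_le n)
  have hΨc : ∀ j ≤ n, Continuous (iteratedDeriv j Ψ) := fun j hj =>
    hΨ.continuous_iteratedDeriv j (by exact_mod_cast hj)
  have hΨd : ∀ j < n, ∀ t : ℝ, HasDerivAt (iteratedDeriv j Ψ) (iteratedDeriv (j + 1) Ψ t) t := by
    intro j hj t
    rw [iteratedDeriv_succ]
    exact ((hΨ.differentiable_iteratedDeriv j (by exact_mod_cast hj)) t).hasDerivAt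
  -- integrability of products Ψ-derivative × g-derivative
  have hprod_int : ∀ j ≤ n, ∀ i ≤ n, ∀ v : ℝ,
      IntegrableOn (fun y => iteratedDeriv j Ψ (v - y) * g i y) (Set.Ioi 0) := by
    intro j hj i hi v
    obtain ⟨C, hC⟩ := hΨ_bdd j hj
    exact (hgi i hi).bdd_mul (c := C)
      ((hΨc j hj).comp (continuous_const.sub continuous_id)).aestronglyMeasurable
      (Eventually.of_forall fun y => by simpa [Real.norm_eq_abs] using hC (v - y))
  -- STEP A: differentiation under the integral sign
  have keyA : ∀ j, j ≤ n → ∀ v : ℝ,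
      iteratedDeriv j I₁ v = ∫ y in Set.Ioi (0:ℝ), iteratedDeriv j Ψ (v - y) * f y := by
    intro j
    induction j with
    | zero =>
      intro _ v
      simp only [iteratedDeriv_zero]
      exact hI₁ v
    | succ j ih =>
      intro hj v
      have hjn : j < n := Nat.lt_of_succ_le hj
      have hJ : iteratedDeriv j I₁ =
          fun w => ∫ y in Set.Ioi (0:ℝ), iteratedDeriv j Ψ (w - y) * f y :=
        funext fun w => ih hjn.le w
      rw [iteratedDeriv_succ, hJ]
      obtain ⟨C, hC⟩ := hΨ_bdd (j + 1) hj
      have main := hasDerivAt_integral_of_dominated_loc_of_deriv_le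
        (μ := volume.restrict (Set.Ioi (0:ℝ)))
        (F := fun w y => iteratedDeriv j Ψ (w - y) * f y)
        (F' := fun w y => iteratedDeriv (j + 1) Ψ (w - y) * f y)
        (x₀ := v) (bound := fun y => C * |f y|) (Metric.ball_mem_nhds v one_pos)
        (Eventually.of_forall fun w =>
          (((hΨc j hjn.le).comp (continuous_const.sub continuous_id)).aestronglyMeasurable).mul
            hfi.aestronglyMeasurable)
        (by simpa [hg0, IntegrableOn] using hprod_int j hjn.le 0 (Nat.zero_le n) v)
        ((((hΨc (j + 1) hj).comp (continuous_const.sub continuous_id)).aestronglyMeasurable).mul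
          hfi.aestronglyMeasurable)
        (Eventually.of_forall fun y w _ => by
          simp only [Real.norm_eq_abs, abs_mul]
          exact mul_le_mul_of_nonneg_right (hC (w - y)) (abs_nonneg _))
        (hfi.abs.const_mul C)
        (Eventually.of_forall fun y w _ => by
          have h1 := (hΨd j hjn (w - y)).comp w ((hasDerivAt_id w).sub_const y)
          simp only [mul_one] at h1
          exact h1.mul_const (f y))
      exact main.2.deriv
  -- single step integration by parts
  have ibp : ∀ m, m < n → ∀ i, i < n →
      (∫ y in Set.Ioi (0:ℝ), iteratedDeriv (m + 1) Ψ (u - y) * g i y)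
        = iteratedDeriv m Ψ u * g i 0
          + ∫ y in Set.Ioi (0:ℝ), iteratedDeriv m Ψ (u - y) * g (i + 1) y := by
    intro m hm i hi
    obtain ⟨C, hC⟩ := hΨ_bdd m hm.le
    have hv : ∀ y : ℝ, HasDerivAt (fun y => -iteratedDeriv m Ψ (u - y))
        (iteratedDeriv (m + 1) Ψ (u - y)) y := by
      intro y
      have h1 := (hΨd m hm (u - y)).comp y ((hasDerivAt_id y).const_sub u)
      have h2 := h1.neg
      rw [show iteratedDeriv (m + 1) Ψ (u - y) = -(iteratedDeriv (m + 1) Ψ (u - y) * -1) by ring]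
      exact h2
    have huv' : IntegrableOn (g i * fun y => iteratedDeriv (m + 1) Ψ (u - y)) (Set.Ioi 0) := by
      have := hprod_int (m + 1) hm i hi.le u
      exact this.congr_fun (fun y _ => by simp [mul_comm]) measurableSet_Ioi
    have hu'v : IntegrableOn ((g (i + 1)) * fun y => -iteratedDeriv m Ψ (u - y)) (Set.Ioi 0) := by
      have h0 : IntegrableOn (fun y => -(iteratedDeriv m Ψ (u - y) * g (i + 1) y)) (Set.Ioi 0) :=
        (hprod_int m hm.le (i + 1) hi u).neg
      exact h0.congr_fun (fun y _ => by simp [Pi.mul_apply]; ring) measurableSet_Ioi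
    have h_zero : Tendsto ((g i) * fun y => -iteratedDeriv m Ψ (u - y)) (nhdsWithin 0 (Set.Ioi 0))
        (nhds (-(g i 0 * iteratedDeriv m Ψ u))) := by
      have h1 : Tendsto (g i) (nhdsWithin 0 (Set.Ioi 0)) (nhds (g i 0)) :=
        ((hgc i hi.le 0 Set.self_mem_Ici).mono Set.Ioi_subset_Ici_self)
      have h2 : Tendsto (fun y => -iteratedDeriv m Ψ (u - y)) (nhdsWithin 0 (Set.Ioi 0))
          (nhds (-iteratedDeriv m Ψ (u - 0))) :=
        (((hΨc m hm.le).comp (continuous_const.sub continuous_id)).neg.tendsto 0).mono_left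
          nhdsWithin_le_nhds
      have h3 := h1.mul h2
      have heq : (g i * fun y => -iteratedDeriv m Ψ (u - y))
          = fun y => g i y * -iteratedDeriv m Ψ (u - y) := rfl
      rw [heq]
      simpa [mul_neg] using h3
    have h_infty : Tendsto ((g i) * fun y => -iteratedDeriv m Ψ (u - y)) atTop (nhds 0) := by
      apply Tendsto.zero_mul_isBoundedUnder_le (hf_lim i hi.le)
      exact isBoundedUnder_of ⟨C, fun y => by
        simpa [Real.norm_eq_abs, abs_neg] using hC (u - y)⟩
    have hmain := integral_Ioi_mul_deriv_eq_deriv_mul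
      (u := g i) (u' := g (i + 1))
      (v := fun y => -iteratedDeriv m Ψ (u - y))
      (v' := fun y => iteratedDeriv (m + 1) Ψ (u - y))
      (fun x hx => hgd i hi x hx) (fun x _ => hv x) huv' hu'v h_zero h_infty
    have e1 : (∫ y in Set.Ioi (0:ℝ), g i y * iteratedDeriv (m + 1) Ψ (u - y))
        = ∫ y in Set.Ioi (0:ℝ), iteratedDeriv (m + 1) Ψ (u - y) * g i y := by
      exact setIntegral_congr_fun measurableSet_Ioi fun y _ => mul_comm _ _
    have e2 : (∫ y in Set.Ioi (0:ℝ), g (i + 1) y * -iteratedDeriv m Ψ (u - y))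
        = -∫ y in Set.Ioi (0:ℝ), iteratedDeriv m Ψ (u - y) * g (i + 1) y := by
      rw [← integral_neg]
      exact setIntegral_congr_fun measurableSet_Ioi fun y _ => by ring
    rw [e1, e2] at hmain
    rw [hmain]
    ring
  -- STEP B: iterated integration by parts
  have keyB : ∀ j, ∀ i, i + j ≤ n →
      (∫ y in Set.Ioi (0:ℝ), iteratedDeriv j Ψ (u - y) * g i y)
        = (∑ k ∈ range j, iteratedDeriv k Ψ u * g (i + j - 1 - k) 0)
          + ∫ y in Set.Ioi (0:ℝ), Ψ (u - y) * g (i + j) y := by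
    intro j
    induction j with
    | zero => intro i _; simp
    | succ j ih =>
      intro i hij
      have hjn : j < n := by omega
      have hin : i < n := by omega
      rw [ibp j hjn i hin, ih (i + 1) (by omega)]
      rw [Finset.sum_range_succ]
      have e1 : ∀ k ∈ range j, iteratedDeriv k Ψ u * g (i + 1 + j - 1 - k) 0
          = iteratedDeriv k Ψ u * g (i + (j + 1) - 1 - k) 0 := by
        intro k hk
        congr 2
        omega
      rw [Finset.sum_congr rfl e1]
      have e2 : i + (j + 1) - 1 - j = i := by omega
      have e3 : i + 1 + j = i + (j + 1) := by omega
      rw [e2, e3]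
      ring
  -- rewrite each term of the LHS
  have hterm : ∀ j ∈ range (n + 1),
      α j * iteratedDeriv j I₁ u
        = (∑ k ∈ range j, α j * (iteratedDeriv k Ψ u * fbd (j - 1 - k)))
          + α j * ∫ y in Set.Ioi (0:ℝ), Ψ (u - y) * g j y := by
    intro j hj
    have hjn : j ≤ n := by simpa [Nat.lt_succ_iff] using hj
    rw [keyA j hjn u]
    have : (∫ y in Set.Ioi (0:ℝ), iteratedDeriv j Ψ (u - y) * f y)
        = (∑ k ∈ range j, iteratedDeriv k Ψ u * g (j - 1 - k) 0)
          + ∫ y in Set.Ioi (0:ℝ), Ψ (u - y) * g j y := by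
      have := keyB j 0 (by omega)
      simpa [hg0] using this
    rw [this, mul_add, Finset.mul_sum]
    congr 1
    refine Finset.sum_congr rfl fun k hk => ?_
    rw [hbc' (j - 1 - k) (by simp at hk; omega)]
  rw [Finset.sum_congr rfl hterm, Finset.sum_add_distrib]
  -- the integral part vanishes
  have hzero : (∑ j ∈ range (n + 1), α j * ∫ y in Set.Ioi (0:ℝ), Ψ (u - y) * g j y) = 0 := by
    have hswap : ∀ j ∈ range (n + 1),
        α j * ∫ y in Set.Ioi (0:ℝ), Ψ (u - y) * g j y
          = ∫ y in Set.Ioi (0:ℝ), α j * (Ψ (u - y) * g j y) := by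
      intro j _
      rw [integral_const_mul]
    rw [Finset.sum_congr rfl hswap, ← integral_finset_sum]
    · have : ∀ y ∈ Set.Ioi (0:ℝ),
          (∑ j ∈ range (n + 1), α j * (Ψ (u - y) * g j y)) = 0 := by
        intro y hy
        have h1 : ∀ j ∈ range (n + 1), α j * (Ψ (u - y) * g j y)
            = Ψ (u - y) * (α j * g j y) := fun j _ => by ring
        rw [Finset.sum_congr rfl h1, ← Finset.mul_sum, hode' y (le_of_lt hy), mul_zero]
      rw [setIntegral_congr_fun measurableSet_Ioi this, integral_zero]
    · intro j hj
      have hjn : j ≤ n := by simpa [Nat.lt_succ_iff] using hj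
      exact ((hprod_int 0 (Nat.zero_le n) j hjn u).congr_fun
        (fun y _ => by simp) measurableSet_Ioi).const_mul (α j)
  rw [hzero, add_zero]
  -- rearrange the double sum
  have hswap2 : (∑ j ∈ range (n + 1), ∑ k ∈ range j,
        α j * (iteratedDeriv k Ψ u * fbd (j - 1 - k)))
      = ∑ k ∈ range n, ∑ j ∈ Ico (k + 1) (n + 1),
        α j * (iteratedDeriv k Ψ u * fbd (j - 1 - k)) := by
    refine Finset.sum_comm' (fun j k => ?_)
    simp only [Finset.mem_range, Finset.mem_Ico]
    omega
  rw [hswap2]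
  refine Finset.sum_congr rfl fun k hk => ?_
  have hkn : k < n := by simpa using hk
  have hmap : Ico (k + 1) (n + 1) = (Icc k (n - 1)).map (addRightEmbedding 1) := by
    rw [Finset.map_add_right_Icc, Finset.Ico_add_one_right_eq_Icc]
    congr 1 <;> omega
  rw [hmap, Finset.sum_map, Finset.mul_sum]
  refine Finset.sum_congr rfl fun i hi => ?_
  simp only [addRightEmbedding_apply]
  have : i + 1 - 1 - k = i - k := by omega
  rw [this]
  ring
end

section
/- Let n ≥ 1 be an integer, ρ ∈ (0,1), δ > 0. Let p(s) = Σ_{i=1}^{2n+1} a_{i+1} s^{i} be a polynomial with a_2 ≠ 0, let v(s) = Σ_{i=0}^{2n} ṽ_{i+1} s^{i} be a polynomial, and let γ₁, γ₂ : (−δ, δ) → ℝ be real-analytic with γ₁(0) ≠ 0 and γ₂(0) ≠ 0. For s ∈ (0, δ) set G₁(s) = γ₁(s), G₂(s) = s^{ρ} γ₂(s), and W(s) = G₁(s) G₂'(s) − G₂(s) G₁'(s), and assume p(s) ≠ 0 and W(s) ≠ 0 on (0, δ). Then, as s → 0⁺: (i) G₂(s)/(p(s) W(s)) converges to the finite limit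 γ₂(0)/(a_2 ρ γ₁(0) γ₂(0)); (ii) s^{ρ} · G₁(s)/(p(s) W(s)) converges to the finite limit γ₁(0)/(a_2 ρ γ₁(0) γ₂(0)); and (iii) the function G^{ps}(s) = −G₁(s) ∫₀^{s} G₂(t) v(t)/(p(t) W(t)) dt + G₂(s) ∫₀^{s} G₁(t) v(t)/(p(t) W(t)) dt is well defined for small s > 0 and satisfies G^{ps}(s) = O(s) as s → 0⁺, i.e. there exist C > 0 and δ' ∈ (0, δ] such that |G^{ps}(s)| ≤ C s for all s ∈ (0, δ'). -/
open Filter Finset Topology MeasureTheory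

/-- With `G₁(s) = γ₁(s)`, `G₂(s) = s^ρ γ₂(s)` the Frobenius solutions and
`W` their Wronskian, as `s → 0⁺`: (i) `G₂(s)/(p(s)W(s)) → γ₂(0)/(a₂ ρ γ₁(0) γ₂(0))`;
(ii) `s^ρ G₁(s)/(p(s)W(s)) → γ₁(0)/(a₂ ρ γ₁(0) γ₂(0))`; (iii) the variation-of-constants
particular solution `G^{ps}` is well defined for small `s > 0` and `G^{ps}(s) = O(s)`. -/
theorem stmt_12 (n : ℕ) (hn : 1 ≤ n) (ρ δ : ℝ) (hρ : ρ ∈ Set.Ioo (0:ℝ) 1) (hδ : 0 < δ)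
    (A V : ℕ → ℝ) (hA : A 2 ≠ 0)
    (p v : ℝ → ℝ)
    (hp : ∀ s : ℝ, p s = ∑ i ∈ Icc 1 (2 * n + 1), A (i + 1) * s ^ i)
    (hv : ∀ s : ℝ, v s = ∑ i ∈ range (2 * n + 1), V (i + 1) * s ^ i)
    (γ₁ γ₂ : ℝ → ℝ)
    (hγ₁ : ∀ x ∈ Set.Ioo (-δ) δ, AnalyticAt ℝ γ₁ x)
    (hγ₂ : ∀ x ∈ Set.Ioo (-δ) δ, AnalyticAt ℝ γ₂ x)
    (hγ₁0 : γ₁ 0 ≠ 0) (hγ₂0 : γ₂ 0 ≠ 0)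
    (G₁ G₂ W : ℝ → ℝ)
    (hG₁ : ∀ s : ℝ, G₁ s = γ₁ s)
    (hG₂ : ∀ s : ℝ, G₂ s = s ^ ρ * γ₂ s)
    (hW : ∀ s : ℝ, W s = G₁ s * deriv G₂ s - G₂ s * deriv G₁ s)
    (hpne : ∀ s ∈ Set.Ioo (0:ℝ) δ, p s ≠ 0)
    (hWne : ∀ s ∈ Set.Ioo (0:ℝ) δ, W s ≠ 0)
    (Gps : ℝ → ℝ)
    (hGps : ∀ s : ℝ, Gps s =
      -G₁ s * (∫ t in (0:ℝ)..s, G₂ t * v t / (p t * W t))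
        + G₂ s * (∫ t in (0:ℝ)..s, G₁ t * v t / (p t * W t))) :
    Tendsto (fun s => G₂ s / (p s * W s)) (𝓝[>] (0:ℝ))
        (𝓝 (γ₂ 0 / (A 2 * ρ * γ₁ 0 * γ₂ 0))) ∧
    Tendsto (fun s => s ^ ρ * G₁ s / (p s * W s)) (𝓝[>] (0:ℝ))
        (𝓝 (γ₁ 0 / (A 2 * ρ * γ₁ 0 * γ₂ 0))) ∧
    ∃ C > (0:ℝ), ∃ δ' ∈ Set.Ioc (0:ℝ) δ, ∀ s ∈ Set.Ioo (0:ℝ) δ',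
      IntervalIntegrable (fun t => G₂ t * v t / (p t * W t)) volume 0 s ∧
      IntervalIntegrable (fun t => G₁ t * v t / (p t * W t)) volume 0 s ∧
      |Gps s| ≤ C * s := by
  obtain ⟨hρ0, hρ1⟩ := hρ
  have h0mem : (0:ℝ) ∈ Set.Ioo (-δ) δ := ⟨by linarith, hδ⟩
  have hγ₁' : AnalyticOnNhd ℝ γ₁ (Set.Ioo (-δ) δ) := hγ₁
  have hγ₂' : AnalyticOnNhd ℝ γ₂ (Set.Ioo (-δ) δ) := hγ₂
  have hdγ₁ : AnalyticOnNhd ℝ (deriv γ₁) (Set.Ioo (-δ) δ) := hγ₁'.deriv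
  have hdγ₂ : AnalyticOnNhd ℝ (deriv γ₂) (Set.Ioo (-δ) δ) := hγ₂'.deriv
  set P : ℝ → ℝ := fun s => ∑ i ∈ range (2*n+1), A (i+2) * s^i with hPdef
  set M : ℝ → ℝ := fun s =>
    ρ * (γ₁ s * γ₂ s) + s * (γ₁ s * deriv γ₂ s - γ₂ s * deriv γ₁ s) with hMdef
  have hG₁eq : G₁ = γ₁ := funext hG₁
  -- p s = s * P s
  have hpP : ∀ s : ℝ, p s = s * P s := by
    intro s
    rw [hp, ← Finset.Ico_add_one_right_eq_Icc, Finset.sum_Ico_eq_sum_range, Finset.mul_sum]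
    refine Finset.sum_congr (by congr 1) fun i _ => ?_
    have h1 : 1 + i + 1 = i + 2 := by omega
    rw [h1, pow_add, pow_one]
    ring
  -- Wronskian formula
  have key : ∀ s ∈ Set.Ioo (0:ℝ) δ, W s = s ^ (ρ - 1) * M s := by
    intro s hs
    have hs0 : 0 < s := hs.1
    have hsmem : s ∈ Set.Ioo (-δ) δ := ⟨by linarith [hs.1], hs.2⟩
    have hd2 : HasDerivAt G₂ (ρ * s ^ (ρ-1) * γ₂ s + s ^ ρ * deriv γ₂ s) s := by
      have h1 : HasDerivAt (fun t : ℝ => t ^ ρ) (ρ * s ^ (ρ-1)) s :=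
        Real.hasDerivAt_rpow_const (Or.inl hs0.ne')
      have h2 : HasDerivAt γ₂ (deriv γ₂ s) s :=
        ((hγ₂ s hsmem).differentiableAt).hasDerivAt
      have h3 := h1.mul h2
      have : G₂ = fun t => t ^ ρ * γ₂ t := funext hG₂
      rw [this]
      exact h3
    rw [hW, hd2.deriv, hG₁eq, hG₂ s]
    have hsρ : s ^ ρ = s ^ (ρ - 1) * s := by
      rw [← Real.rpow_add_one hs0.ne']; ring_nf
    simp only [hMdef]
    rw [hsρ]; ring
  have hpW : ∀ s ∈ Set.Ioo (0:ℝ) δ, p s * W s = s ^ ρ * (P s * M s) := by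
    intro s hs
    rw [hpP, key s hs]
    have h : s ^ (ρ - 1) * s = s ^ ρ := by
      rw [← Real.rpow_add_one hs.1.ne']; ring_nf
    rw [← h]; ring
  -- continuity
  have hPcont : Continuous P := by
    simp only [hPdef]
    exact continuous_finset_sum _ fun i _ => continuous_const.mul (continuous_pow i)
  have hvcont : Continuous v := by
    have : v = fun s => ∑ i ∈ range (2*n+1), V (i+1) * s ^ i := funext hv
    rw [this]
    exact continuous_finset_sum _ fun i _ => continuous_const.mul (continuous_pow i)
  have hMcontAt : ∀ x ∈ Set.Ioo (-δ) δ, ContinuousAt M x := by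
    intro x hx
    have c1 := (hγ₁ x hx).continuousAt
    have c2 := (hγ₂ x hx).continuousAt
    have d1 := (hdγ₁ x hx).continuousAt
    have d2 := (hdγ₂ x hx).continuousAt
    exact (continuousAt_const.mul (c1.mul c2)).add
      (continuousAt_id.mul ((c1.mul d2).sub (c2.mul d1)))
  have hP0 : P 0 = A 2 := by
    simp only [hPdef]
    rw [Finset.sum_eq_single 0]
    · norm_num
    · intro i _ hi; simp [zero_pow hi]
    · intro h; exact absurd (Finset.mem_range.mpr (by omega)) h
  have hM0 : M 0 = ρ * (γ₁ 0 * γ₂ 0) := by simp [hMdef]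
  have hPM0 : P 0 * M 0 = A 2 * ρ * γ₁ 0 * γ₂ 0 := by rw [hP0, hM0]; ring
  have hPM0ne : P 0 * M 0 ≠ 0 := by
    rw [hPM0]
    exact mul_ne_zero (mul_ne_zero (mul_ne_zero hA hρ0.ne') hγ₁0) hγ₂0
  have hDmem : Set.Ioo (0:ℝ) δ ∈ 𝓝[>] (0:ℝ) := Ioo_mem_nhdsGT_of_mem ⟨le_refl 0, hδ⟩
  have hPMcont : ContinuousAt (fun s => P s * M s) 0 :=
    (hPcont.continuousAt).mul (hMcontAt 0 h0mem)
  -- limit (i)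
  have T1 : Tendsto (fun s => G₂ s / (p s * W s)) (𝓝[>] (0:ℝ))
      (𝓝 (γ₂ 0 / (A 2 * ρ * γ₁ 0 * γ₂ 0))) := by
    have hlim : Tendsto (fun s => γ₂ s / (P s * M s)) (𝓝[>] (0:ℝ))
        (𝓝 (γ₂ 0 / (P 0 * M 0))) :=
      Tendsto.mono_left (((hγ₂ 0 h0mem).continuousAt).div hPMcont hPM0ne) nhdsWithin_le_nhds
    rw [← hPM0]
    refine hlim.congr' ?_
    filter_upwards [hDmem] with s hs
    rw [hG₂, hpW s hs, mul_div_mul_left _ _ (Real.rpow_pos_of_pos hs.1 ρ).ne']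
  have T2 : Tendsto (fun s => s ^ ρ * G₁ s / (p s * W s)) (𝓝[>] (0:ℝ))
      (𝓝 (γ₁ 0 / (A 2 * ρ * γ₁ 0 * γ₂ 0))) := by
    have hlim : Tendsto (fun s => γ₁ s / (P s * M s)) (𝓝[>] (0:ℝ))
        (𝓝 (γ₁ 0 / (P 0 * M 0))) :=
      Tendsto.mono_left (((hγ₁ 0 h0mem).continuousAt).div hPMcont hPM0ne) nhdsWithin_le_nhds
    rw [← hPM0]
    refine hlim.congr' ?_
    filter_upwards [hDmem] with s hs
    rw [hG₁, hpW s hs, mul_div_mul_left _ _ (Real.rpow_pos_of_pos hs.1 ρ).ne']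
  refine ⟨T1, T2, ?_⟩
  -- choose δ'
  have hne_ev : ∀ᶠ x in 𝓝 (0:ℝ), P x * M x ≠ 0 ∧ x ∈ Set.Ioo (-δ) δ :=
    (hPMcont.eventually_ne hPM0ne).and (isOpen_Ioo.eventually_mem h0mem)
  obtain ⟨η, hη0, hη⟩ := Metric.eventually_nhds_iff_ball.mp hne_ev
  set δ' := min (η/2) (δ/2) with hδ'def
  have hδ'0 : 0 < δ' := lt_min (by linarith) (by linarith)
  have hδ'δ : δ' ≤ δ := le_trans (min_le_right _ _) (by linarith)
  have hIccsub : ∀ x ∈ Set.Icc (0:ℝ) δ', P x * M x ≠ 0 ∧ x ∈ Set.Ioo (-δ) δ := by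
    intro x hx
    apply hη
    rw [Metric.mem_ball, Real.dist_eq, sub_zero, abs_of_nonneg hx.1]
    have h1 : x ≤ δ' := hx.2
    have h2 : δ' ≤ η/2 := min_le_left _ _
    linarith
  set f₁ : ℝ → ℝ := fun t => γ₁ t * v t / (P t * M t) with hf₁def
  set f₂ : ℝ → ℝ := fun t => γ₂ t * v t / (P t * M t) with hf₂def
  have hcontOn : ∀ (g : ℝ → ℝ), (∀ x ∈ Set.Ioo (-δ) δ, ContinuousAt g x) →
      ContinuousOn (fun t => g t * v t / (P t * M t)) (Set.Icc 0 δ') := by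
    intro g hg x hx
    obtain ⟨hne, hmem⟩ := hIccsub x hx
    exact (((hg x hmem).mul hvcont.continuousAt).div
      ((hPcont.continuousAt).mul (hMcontAt x hmem)) hne).continuousWithinAt
  have hf₁cont : ContinuousOn f₁ (Set.Icc 0 δ') :=
    hcontOn γ₁ (fun x hx => (hγ₁ x hx).continuousAt)
  have hf₂cont : ContinuousOn f₂ (Set.Icc 0 δ') :=
    hcontOn γ₂ (fun x hx => (hγ₂ x hx).continuousAt)
  obtain ⟨K₁, hK₁⟩ := isCompact_Icc.exists_bound_of_continuousOn hf₁cont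
  obtain ⟨K₂, hK₂⟩ := isCompact_Icc.exists_bound_of_continuousOn hf₂cont
  have hγ₁cont : ContinuousOn γ₁ (Set.Icc 0 δ') := fun x hx =>
    ((hγ₁ x (hIccsub x hx).2).continuousAt).continuousWithinAt
  have hγ₂cont : ContinuousOn γ₂ (Set.Icc 0 δ') := fun x hx =>
    ((hγ₂ x (hIccsub x hx).2).continuousAt).continuousWithinAt
  obtain ⟨B₁, hB₁⟩ := isCompact_Icc.exists_bound_of_continuousOn hγ₁cont
  obtain ⟨B₂, hB₂⟩ := isCompact_Icc.exists_bound_of_continuousOn hγ₂cont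
  have h0Icc : (0:ℝ) ∈ Set.Icc (0:ℝ) δ' := ⟨le_refl 0, hδ'0.le⟩
  have hK₁0 : 0 ≤ K₁ := (norm_nonneg _).trans (hK₁ 0 h0Icc)
  have hK₂0 : 0 ≤ K₂ := (norm_nonneg _).trans (hK₂ 0 h0Icc)
  have hB₁0 : 0 ≤ B₁ := (norm_nonneg _).trans (hB₁ 0 h0Icc)
  have hB₂0 : 0 ≤ B₂ := (norm_nonneg _).trans (hB₂ 0 h0Icc)
  -- pointwise identities
  have id2 : ∀ t ∈ Set.Ioo (0:ℝ) δ, G₂ t * v t / (p t * W t) = f₂ t := by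
    intro t ht
    rw [hG₂, hpW t ht, hf₂def, mul_assoc]
    exact mul_div_mul_left _ _ (Real.rpow_pos_of_pos ht.1 ρ).ne'
  have id1 : ∀ t ∈ Set.Ioo (0:ℝ) δ, G₁ t * v t / (p t * W t) = t ^ (-ρ) * f₁ t := by
    intro t ht
    simp only [hG₁, hpW t ht, hf₁def, Real.rpow_neg ht.1.le]
    rw [div_eq_mul_inv, div_eq_mul_inv, mul_inv]
    ring
  have hC0 : 0 < B₁ * K₂ + B₂ * K₁ / (1 - ρ) + 1 := by
    have h1 : 0 ≤ B₁ * K₂ := mul_nonneg hB₁0 hK₂0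
    have h2 : 0 ≤ B₂ * K₁ / (1 - ρ) :=
      div_nonneg (mul_nonneg hB₂0 hK₁0) (by linarith)
    linarith
  refine ⟨B₁ * K₂ + B₂ * K₁ / (1 - ρ) + 1, hC0, δ', ⟨hδ'0, hδ'δ⟩, ?_⟩
  intro s hs
  have hs0 : 0 < s := hs.1
  have hsδ : s < δ := lt_of_lt_of_le hs.2 hδ'δ
  have hsIoo : ∀ t ∈ Set.Ioc (0:ℝ) s, t ∈ Set.Ioo (0:ℝ) δ := fun t ht =>
    ⟨ht.1, lt_of_le_of_lt ht.2 hsδ⟩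
  have hsIcc : ∀ t ∈ Set.Ioc (0:ℝ) s, t ∈ Set.Icc (0:ℝ) δ' := fun t ht =>
    ⟨ht.1.le, le_trans ht.2 hs.2.le⟩
  have huIcc : Set.uIcc (0:ℝ) s ⊆ Set.Icc (0:ℝ) δ' := by
    rw [Set.uIcc_of_le hs0.le]
    exact Set.Icc_subset_Icc (le_refl _) hs.2.le
  -- integrability 1
  have hint2 : IntervalIntegrable (fun t => G₂ t * v t / (p t * W t)) volume 0 s := by
    rw [intervalIntegrable_iff_integrableOn_Ioc_of_le hs0.le]
    have hf2int : IntegrableOn f₂ (Set.Ioc 0 s) volume := by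
      have := (hf₂cont.mono huIcc).intervalIntegrable (μ := volume) (a := 0) (b := s)
      rwa [intervalIntegrable_iff_integrableOn_Ioc_of_le hs0.le] at this
    exact hf2int.congr_fun (fun t ht => (id2 t (hsIoo t ht)).symm) measurableSet_Ioc
  -- integrability 2
  have hint1 : IntervalIntegrable (fun t => G₁ t * v t / (p t * W t)) volume 0 s := by
    rw [intervalIntegrable_iff_integrableOn_Ioc_of_le hs0.le]
    have hboundint : IntegrableOn (fun t => K₁ * t ^ (-ρ)) (Set.Ioc 0 s) volume := by
      have h := intervalIntegral.intervalIntegrable_rpow' (a := 0) (b := s) (r := -ρ) (by linarith)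
      rw [intervalIntegrable_iff_integrableOn_Ioc_of_le hs0.le] at h
      exact h.const_mul K₁
    have hcont : ContinuousOn (fun t => t ^ (-ρ) * f₁ t) (Set.Ioc (0:ℝ) s) := by
      refine ContinuousOn.mul ?_ (hf₁cont.mono (fun t ht => hsIcc t ht))
      exact (continuousOn_id).rpow_const (fun x hx => Or.inl (ne_of_gt hx.1))
    have hmain : IntegrableOn (fun t => t ^ (-ρ) * f₁ t) (Set.Ioc 0 s) volume := by
      refine hboundint.mono' (hcont.aestronglyMeasurable measurableSet_Ioc) ?_
      rw [ae_restrict_iff' measurableSet_Ioc]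
      refine ae_of_all _ fun t ht => ?_
      have htρ : (0:ℝ) ≤ t ^ (-ρ) := Real.rpow_nonneg ht.1.le _
      rw [Real.norm_eq_abs, abs_mul, abs_of_nonneg htρ]
      calc t ^ (-ρ) * |f₁ t| ≤ t ^ (-ρ) * K₁ :=
            mul_le_mul_of_nonneg_left (hK₁ t (hsIcc t ht)) htρ
        _ = K₁ * t ^ (-ρ) := by ring
    exact hmain.congr_fun (fun t ht => (id1 t (hsIoo t ht)).symm) measurableSet_Ioc
  refine ⟨hint2, hint1, ?_⟩
  -- bound on the first integral
  have bnd2 : |∫ t in (0:ℝ)..s, G₂ t * v t / (p t * W t)| ≤ K₂ * s := by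
    have h := intervalIntegral.norm_integral_le_of_norm_le_const (C := K₂)
      (f := fun t => G₂ t * v t / (p t * W t)) (a := 0) (b := s) ?_
    · rw [Real.norm_eq_abs] at h
      simpa [abs_of_nonneg hs0.le] using h
    · intro x hx
      rw [Set.uIoc_of_le hs0.le] at hx
      show ‖G₂ x * v x / (p x * W x)‖ ≤ K₂
      rw [Real.norm_eq_abs, id2 x (hsIoo x hx)]
      exact hK₂ x (hsIcc x hx)
  -- bound on the second integral
  have bnd1 : |∫ t in (0:ℝ)..s, G₁ t * v t / (p t * W t)| ≤ K₁ * (s ^ (1-ρ) / (1-ρ)) := by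
    have hb : IntervalIntegrable (fun t => K₁ * t ^ (-ρ)) volume 0 s :=
      (intervalIntegral.intervalIntegrable_rpow' (by linarith)).const_mul K₁
    have hle := intervalIntegral.norm_integral_le_of_norm_le (μ := volume)
      (f := fun t => G₁ t * v t / (p t * W t)) (g := fun t => K₁ * t ^ (-ρ))
      (a := 0) (b := s) hs0.le ?_ hb
    · have hval : (∫ t in (0:ℝ)..s, K₁ * t ^ (-ρ)) = K₁ * (s ^ (1-ρ) / (1-ρ)) := by
        rw [intervalIntegral.integral_const_mul, integral_rpow (Or.inl (by linarith))]
        rw [Real.zero_rpow (by linarith : -ρ + 1 ≠ 0), show (-ρ + 1 : ℝ) = 1 - ρ by ring]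
        ring
      rw [hval] at hle
      rw [Real.norm_eq_abs] at hle
      have hnn : 0 ≤ K₁ * (s ^ (1-ρ) / (1-ρ)) :=
        mul_nonneg hK₁0 (div_nonneg (Real.rpow_nonneg hs0.le _) (by linarith))
      exact hle
    · refine ae_of_all _ fun t ht => ?_
      have htρ : (0:ℝ) ≤ t ^ (-ρ) := Real.rpow_nonneg ht.1.le _
      show ‖G₁ t * v t / (p t * W t)‖ ≤ K₁ * t ^ (-ρ)
      rw [Real.norm_eq_abs, id1 t (hsIoo t ht), abs_mul, abs_of_nonneg htρ]
      calc t ^ (-ρ) * |f₁ t| ≤ t ^ (-ρ) * K₁ :=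
            mul_le_mul_of_nonneg_left (hK₁ t (hsIcc t ht)) htρ
        _ = K₁ * t ^ (-ρ) := by ring
  -- final bound
  have hsmemIcc : s ∈ Set.Icc (0:ℝ) δ' := ⟨hs0.le, hs.2.le⟩
  have hG₁b : |G₁ s| ≤ B₁ := by rw [hG₁]; exact hB₁ s hsmemIcc
  have hG₂b : |G₂ s| ≤ s ^ ρ * B₂ := by
    rw [hG₂, abs_mul, abs_of_nonneg (Real.rpow_nonneg hs0.le ρ)]
    exact mul_le_mul_of_nonneg_left (hB₂ s hsmemIcc) (Real.rpow_nonneg hs0.le ρ)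
  rw [hGps]
  calc |(-G₁ s) * (∫ t in (0:ℝ)..s, G₂ t * v t / (p t * W t))
        + G₂ s * (∫ t in (0:ℝ)..s, G₁ t * v t / (p t * W t))|
      ≤ |G₁ s| * |∫ t in (0:ℝ)..s, G₂ t * v t / (p t * W t)|
        + |G₂ s| * |∫ t in (0:ℝ)..s, G₁ t * v t / (p t * W t)| := by
        refine (abs_add_le _ _).trans ?_
        rw [abs_mul, abs_mul, abs_neg]
    _ ≤ B₁ * (K₂ * s) + (s ^ ρ * B₂) * (K₁ * (s ^ (1-ρ) / (1-ρ))) := by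
        refine add_le_add ?_ ?_
        · exact mul_le_mul hG₁b bnd2 (abs_nonneg _) hB₁0
        · exact mul_le_mul hG₂b bnd1 (abs_nonneg _)
            (mul_nonneg (Real.rpow_nonneg hs0.le ρ) hB₂0)
    _ ≤ (B₁ * K₂ + B₂ * K₁ / (1 - ρ) + 1) * s := by
        have hss : s ^ ρ * s ^ (1-ρ) = s := by
          rw [← Real.rpow_add hs0]
          norm_num
        have heq : (s ^ ρ * B₂) * (K₁ * (s ^ (1-ρ) / (1-ρ)))
            = B₂ * K₁ / (1-ρ) * (s ^ ρ * s ^ (1-ρ)) := by ring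
        rw [heq, hss]
        have hexp : (B₁ * K₂ + B₂ * K₁ / (1 - ρ) + 1) * s
            = B₁ * (K₂ * s) + B₂ * K₁ / (1-ρ) * s + s := by ring
        rw [hexp]
        linarith
end
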